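/- For β, η ∈ (0,1) with r = 1+β²+4η²-2β-2η-βη ≥ 0, define y_opt = (-(5-2β-2η) + √r)/(3(β-2)). If β = 1 - 2√(η(1-η)), then y_opt = (-(5-2β-2η) + √(η(2-β)))/(3(β-2)) and the cubic c₃y³+c₂y²+c₁y+c₀ (with c₃=β-2, c₂=5-2β-2η, c₁=β-4+3η, c₀=1-η) vanishes at y = y_opt. -/

import Mathlib

/-- For β, η ∈ (0,1) with r = 1+β²+4η²-2β-2η-βη ≥ 0 and
y_opt = (-(5-2β-2η) + √r)/(3(β-2)), if β = 1 - 2√(η(1-η)) then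
y_opt = (-(5-2β-2η) + √(η(2-β)))/(3(β-2)) and the cubic
c₃y³ + c₂y² + c₁y + c₀ vanishes at y_opt. -/
theorem yopt_root_of_cubic (β η : ℝ) (hβ0 : β ∈ Set.Ioo (0 : ℝ) 1)
    (hη : η ∈ Set.Ioo (0 : ℝ) 1)
    (hr : 0 ≤ 1 + β ^ 2 + 4 * η ^ 2 - 2 * β - 2 * η - β * η)
    (hβ : β = 1 - 2 * Real.sqrt (η * (1 - η))) :
    let r := 1 + β ^ 2 + 4 * η ^ 2 - 2 * β - 2 * η - β * η
    let yopt := (-(5 - 2 * β - 2 * η) + Real.sqrt r) / (3 * (β - 2))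
    yopt = (-(5 - 2 * β - 2 * η) + Real.sqrt (η * (2 - β))) / (3 * (β - 2)) ∧
    (β - 2) * yopt ^ 3 + (5 - 2 * β - 2 * η) * yopt ^ 2 +
      (β - 4 + 3 * η) * yopt + (1 - η) = 0 := by
  obtain ⟨hη0, hη1⟩ := hη
  set s := Real.sqrt (η * (1 - η)) with hsdef
  have hs0 : 0 ≤ s := Real.sqrt_nonneg _
  have hs2 : s ^ 2 = η * (1 - η) := Real.sq_sqrt (by nlinarith)
  have hsum : 0 ≤ s + η := by linarith
  have hrval : 1 + β ^ 2 + 4 * η ^ 2 - 2 * β - 2 * η - β * η = (s + η) ^ 2 := by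
    rw [hβ]; linear_combination 3 * hs2
  have h2val : η * (2 - β) = (s + η) ^ 2 := by
    rw [hβ]; linear_combination -hs2
  have hsr : Real.sqrt (1 + β ^ 2 + 4 * η ^ 2 - 2 * β - 2 * η - β * η) = s + η := by
    rw [hrval, Real.sqrt_sq hsum]
  have hsr2 : Real.sqrt (η * (2 - β)) = s + η := by
    rw [h2val, Real.sqrt_sq hsum]
  have hden : 1 + 2 * s > 0 := by linarith
  have hne : (1 + 2 * s) ≠ 0 := ne_of_gt hden
  have hβ2 : β - 2 = -(1 + 2 * s) := by rw [hβ]; ring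
  have h3 : (3 : ℝ) * (β - 2) ≠ 0 := by rw [hβ2]; intro h; nlinarith
  intro r yopt
  have hy : yopt = (1 + s - η) / (1 + 2 * s) := by
    show (-(5 - 2 * β - 2 * η) + Real.sqrt r) / (3 * (β - 2)) = _
    rw [show Real.sqrt r = s + η from hsr]
    rw [div_eq_div_iff h3 hne, hβ2, hβ]
    ring
  constructor
  · rw [show yopt = (-(5 - 2 * β - 2 * η) + Real.sqrt r) / (3 * (β - 2)) from rfl,
      show Real.sqrt r = s + η from hsr, hsr2]
  · rw [hy, hβ]
    field_simp
    linear_combination (-2 * s ^ 2 - s - 2 * s * η - η) * hs2
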